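/- In the generalized linear model setting, suppose the exponential moment condition (expζᵢ) holds: for some λ*₁ > 0 and values 𝔫ᵢ > 0, log E exp{ 2λ (Yᵢ − bᵢ)/𝔫ᵢ } ≤ 2λ² for all |λ| ≤ λ*₁ and all i ≤ n. Then: (a) if for some μ > 0 one has μ |Ψᵢᵀ(θ−θ₀)| 𝔫ᵢ ≤ λ*₁ for all i and all θ ∈ Θ, then the rate function M(θ,θ₀) = −log E exp{𝓛(θ) − 𝓛(θ₀)} is finite for all θ ∈ Θ; (b) if λ is such that |λ cᵢ(γ)| ≤ λ*₁ for all i and all unit vectors γ, where cᵢ(γ) = γᵀΨᵢ 𝔫ᵢ (γᵀV₁γ)^{−1/2}, then log E exp{ 2λ γᵀ∇ζ / √(γᵀVγ) } ≤ 2λ² for all unit γ, where ζ = 𝓛(θ) − E 𝓛(θ) so that ∇ζ = μ Σᵢ (Yᵢ − bᵢ)Ψᵢ, V₁ = Σᵢ 𝔫ᵢ² ΨᵢΨᵢᵀ and V = μ²V₁. -/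

import Mathlib

/-!
After centring, `𝓛(θ) − 𝓛(θ₀)` is a constant plus `∑ cᵢ (Yᵢ − bᵢ)` with `cᵢ = μ Ψᵢᵀ(θ − θ₀)`,
and the normalized score `2λ γᵀ∇ζ / √(γᵀVγ)` is such a sum with
`cᵢ = 2λ γᵀΨᵢ / √(γᵀV₁γ)`. By independence the exponential moment of `∑ cᵢ (Yᵢ − bᵢ)` is the
product of the individual ones, and `(expζᵢ)` at `λ = cᵢ𝔫ᵢ/2` bounds each factor by
`exp (cᵢ²𝔫ᵢ²/2)`. For the score, `∑ cᵢ²𝔫ᵢ²/2 = 2λ²` since `γᵀV₁γ = ∑ 𝔫ᵢ² (γᵀΨᵢ)²`.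
-/

set_option autoImplicit false

open MeasureTheory Matrix Set
open scoped ENNReal

noncomputable section

/-- Quadratic form `xᵀ V x` on `ℝ^p`. -/
def qf {p : ℕ} (V : Matrix (Fin p) (Fin p) ℝ) (x : Fin p → ℝ) : ℝ := x ⬝ᵥ V.mulVec x

/-- The quasi log-likelihood of the generalized linear model:
`𝓛(θ) = μ Σᵢ {Yᵢ Ψᵢᵀθ − d(Ψᵢᵀθ)}`. -/
def glmL {Ω : Type*} {n p : ℕ} (Y : Fin n → Ω → ℝ) (Ψ : Fin n → Fin p → ℝ)
    (d : ℝ → ℝ) (μ : ℝ) (θ : Fin p → ℝ) (ω : Ω) : ℝ :=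
  μ * ∑ i, (Y i ω * (Ψ i ⬝ᵥ θ) - d (Ψ i ⬝ᵥ θ))

open ProbabilityTheory

lemma qf_smul {p : ℕ} (a : ℝ) (V : Matrix (Fin p) (Fin p) ℝ) (x : Fin p → ℝ) :
    qf (a • V) x = a * qf V x := by
  simp only [qf, smul_mulVec, dotProduct_smul, smul_eq_mul]

lemma qf_sum_smul_vecMulVec_self {ι : Type*} [Fintype ι] {p : ℕ} (w : ι → ℝ)
    (v : ι → Fin p → ℝ) (x : Fin p → ℝ) :
    qf (∑ j, w j • vecMulVec (v j) (v j)) x = ∑ j, w j * (x ⬝ᵥ v j) ^ 2 := by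
  simp only [qf, sum_mulVec, smul_mulVec, vecMulVec_mulVec, dotProduct_sum, dotProduct_smul,
    smul_eq_mul, MulOpposite.smul_eq_mul_unop, MulOpposite.unop_op, dotProduct_comm (v _) x]
  refine Finset.sum_congr rfl fun j _ => ?_
  ring

lemma lintegral_ofReal_le_ofReal_iff {α : Type*} [MeasurableSpace α] {P : Measure α}
    {g : α → ℝ} (hg : 0 ≤ g) (hgm : AEStronglyMeasurable g P) {B : ℝ} (hB : 0 ≤ B) :
    ∫⁻ ω, ENNReal.ofReal (g ω) ∂P ≤ ENNReal.ofReal B ↔ Integrable g P ∧ ∫ ω, g ω ∂P ≤ B := by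
  have hg' : 0 ≤ᵐ[P] g := Filter.Eventually.of_forall hg
  constructor
  · intro h
    have hint : Integrable g P :=
      ⟨hgm, (hasFiniteIntegral_iff_ofReal hg').2 (h.trans_lt ENNReal.ofReal_lt_top)⟩
    refine ⟨hint, ?_⟩
    rw [← ENNReal.ofReal_le_ofReal_iff hB, ofReal_integral_eq_lintegral_ofReal hint hg']
    exact h
  · rintro ⟨hint, hle⟩
    rw [← ofReal_integral_eq_lintegral_ofReal hint hg']
    exact ENNReal.ofReal_le_ofReal hle

section ExpMoment

variable {Ω : Type*} [MeasurableSpace Ω]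

def HasExpMomentBound (X : Ω → ℝ) (P : Measure Ω) (m lam₁ : ℝ) : Prop :=
  ∀ lam : ℝ, |lam| ≤ lam₁ →
    ∫⁻ ω, ENNReal.ofReal (Real.exp (2 * lam * X ω / m)) ∂P ≤ ENNReal.ofReal (Real.exp (2 * lam ^ 2))

variable {P : Measure Ω}

lemma HasExpMomentBound.integrable_exp_mul_and_mgf_le {X : Ω → ℝ} (hX : Measurable X)
    {m lam₁ : ℝ} (hm : 0 < m) (hbound : HasExpMomentBound X P m lam₁) {c : ℝ}
    (hc : |c| * m ≤ 2 * lam₁) :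
    Integrable (fun ω => Real.exp (c * X ω)) P ∧ mgf X P c ≤ Real.exp (c ^ 2 * m ^ 2 / 2) := by
  have hlam : |c * m / 2| ≤ lam₁ := by
    rw [abs_div, abs_mul, abs_of_pos hm, abs_two]
    linarith
  have h := hbound _ hlam
  have hexponent : ∀ ω, 2 * (c * m / 2) * X ω / m = c * X ω := fun ω => by
    field_simp
  simp only [hexponent] at h
  rw [show 2 * (c * m / 2) ^ 2 = c ^ 2 * m ^ 2 / 2 by ring] at h
  exact (lintegral_ofReal_le_ofReal_iff (fun ω => (Real.exp_pos _).le)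
    (hX.const_mul c).exp.aestronglyMeasurable (Real.exp_pos _).le).1 h

lemma ProbabilityTheory.iIndepFun.integrable_exp_sum_mul_and_integral_le {ι : Type*} [Fintype ι]
    {X : ι → Ω → ℝ} (hindep : iIndepFun X P) (hmeas : ∀ i, Measurable (X i))
    {m : ι → ℝ} (hm : ∀ i, 0 < m i) {lam₁ : ℝ}
    (hbound : ∀ i, HasExpMomentBound (X i) P (m i) lam₁) {c : ι → ℝ}
    (hc : ∀ i, |c i| * m i ≤ 2 * lam₁) :
    Integrable (fun ω => Real.exp (∑ i, c i * X i ω)) P ∧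
      ∫ ω, Real.exp (∑ i, c i * X i ω) ∂P ≤ Real.exp (∑ i, c i ^ 2 * m i ^ 2 / 2) := by
  have := hindep.isProbabilityMeasure
  have hmoment i := (hbound i).integrable_exp_mul_and_mgf_le (hmeas i) (hm i) (hc i)
  set Z : ι → Ω → ℝ := fun i ω => c i * X i ω
  have hZ : iIndepFun Z P := hindep.comp (fun i x => c i * x) fun i => measurable_const_mul _
  have hZmeas i : Measurable (Z i) := (hmeas i).const_mul (c i)
  have hsum : ∀ ω, ∑ i, c i * X i ω = 1 * (∑ i, Z i) ω := fun ω => by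
    simp only [Z, Finset.sum_apply, one_mul]
  simp only [hsum]
  refine ⟨hZ.integrable_exp_mul_sum hZmeas fun i _ => by simpa [Z] using (hmoment i).1, ?_⟩
  calc mgf (∑ i, Z i) P 1 = ∏ i, mgf (X i) P (c i) := by
        simp only [hZ.mgf_sum hZmeas, Z, mgf_const_mul, mul_one]
    _ ≤ ∏ i, Real.exp (c i ^ 2 * m i ^ 2 / 2) :=
        Finset.prod_le_prod (fun i _ => mgf_nonneg) fun i _ => (hmoment i).2
    _ = Real.exp (∑ i, c i ^ 2 * m i ^ 2 / 2) := (Real.exp_sum _ _).symm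

lemma ProbabilityTheory.iIndepFun.sub_const {ι : Type*} {X : ι → Ω → ℝ} (hX : iIndepFun X P)
    (a : ι → ℝ) : iIndepFun (fun i ω => X i ω - a i) P :=
  hX.comp (fun i x => x - a i) fun _ => measurable_id.sub_const _

end ExpMoment

lemma glmL_sub_glmL {Ω : Type*} {n p : ℕ} (Y : Fin n → Ω → ℝ) (b : Fin n → ℝ)
    (Ψ : Fin n → Fin p → ℝ) (d : ℝ → ℝ) (μ : ℝ) (θ θ' : Fin p → ℝ) (ω : Ω) :
    glmL Y Ψ d μ θ ω - glmL Y Ψ d μ θ' ω =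
      ∑ i, μ * (Ψ i ⬝ᵥ (θ - θ')) * (Y i ω - b i) +
        μ * ∑ i, ((Ψ i ⬝ᵥ (θ - θ')) * b i - (d (Ψ i ⬝ᵥ θ) - d (Ψ i ⬝ᵥ θ'))) := by
  simp only [glmL, dotProduct_sub, Finset.mul_sum, ← Finset.sum_sub_distrib,
    ← Finset.sum_add_distrib]
  refine Finset.sum_congr rfl fun i _ => ?_
  ring

section GLM

variable {Ω : Type*} [MeasurableSpace Ω] {P : Measure Ω} {n p : ℕ} {Y : Fin n → Ω → ℝ}
  {b : Fin n → ℝ} {𝔫 : Fin n → ℝ} {lam₁ : ℝ}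

lemma integrable_exp_glmL_sub (hYmeas : ∀ i, Measurable (Y i)) (hYindep : iIndepFun Y P)
    (h𝔫 : ∀ i, 0 < 𝔫 i) (hexp : ∀ i, HasExpMomentBound (fun ω => Y i ω - b i) P (𝔫 i) lam₁)
    (Ψ : Fin n → Fin p → ℝ) (d : ℝ → ℝ) {μ : ℝ} (hμ : 0 < μ) {θ θ₀ : Fin p → ℝ}
    (hθ : ∀ i, μ * |Ψ i ⬝ᵥ (θ - θ₀)| * 𝔫 i ≤ lam₁) :
    Integrable (fun ω => Real.exp (glmL Y Ψ d μ θ ω - glmL Y Ψ d μ θ₀ ω)) P := by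
  have hc i : |μ * (Ψ i ⬝ᵥ (θ - θ₀))| * 𝔫 i ≤ 2 * lam₁ := by
    rw [abs_mul, abs_of_pos hμ]
    linarith [hθ i, mul_nonneg (mul_nonneg hμ.le (abs_nonneg (Ψ i ⬝ᵥ (θ - θ₀)))) (h𝔫 i).le]
  have hint := ((hYindep.sub_const b).integrable_exp_sum_mul_and_integral_le
    (fun i => (hYmeas i).sub_const (b i)) h𝔫 hexp hc).1
  simp only [glmL_sub_glmL Y b, Real.exp_add]
  exact hint.mul_const _

lemma lintegral_exp_normalized_score_le (hYmeas : ∀ i, Measurable (Y i))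
    (hYindep : iIndepFun Y P) (h𝔫 : ∀ i, 0 < 𝔫 i)
    (hexp : ∀ i, HasExpMomentBound (fun ω => Y i ω - b i) P (𝔫 i) lam₁)
    (Ψ : Fin n → Fin p → ℝ) {μ : ℝ} (hμ : 0 < μ) {lam : ℝ} {γ : Fin p → ℝ}
    (hlam : ∀ i, |lam * ((γ ⬝ᵥ Ψ i) * 𝔫 i /
      Real.sqrt (qf (∑ j, (𝔫 j) ^ 2 • vecMulVec (Ψ j) (Ψ j)) γ))| ≤ lam₁) :
    ∫⁻ ω, ENNReal.ofReal (Real.exp (2 * lam * (μ * ∑ i, (Y i ω - b i) * (γ ⬝ᵥ Ψ i)) /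
        Real.sqrt (qf (μ ^ 2 • ∑ j, (𝔫 j) ^ 2 • vecMulVec (Ψ j) (Ψ j)) γ))) ∂P
      ≤ ENNReal.ofReal (Real.exp (2 * lam ^ 2)) := by
  set q := qf (∑ j, (𝔫 j) ^ 2 • vecMulVec (Ψ j) (Ψ j)) γ
  have hq : q = ∑ j, (𝔫 j) ^ 2 * (γ ⬝ᵥ Ψ j) ^ 2 := qf_sum_smul_vecMulVec_self _ _ _
  have hq_nonneg : 0 ≤ q := hq ▸ by positivity
  have hsqrt : Real.sqrt (qf (μ ^ 2 • ∑ j, (𝔫 j) ^ 2 • vecMulVec (Ψ j) (Ψ j)) γ) =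
      μ * Real.sqrt q := by
    rw [qf_smul, Real.sqrt_mul (sq_nonneg μ), Real.sqrt_sq hμ.le]
  set c : Fin n → ℝ := fun i => 2 * lam * (γ ⬝ᵥ Ψ i) / Real.sqrt q
  have hc i : |c i| * 𝔫 i ≤ 2 * lam₁ := by
    have : |c i| * 𝔫 i = 2 * |lam * ((γ ⬝ᵥ Ψ i) * 𝔫 i / Real.sqrt q)| := by
      rw [← abs_of_pos (h𝔫 i), ← abs_mul, abs_of_pos (h𝔫 i), ← abs_two, ← abs_mul]
      congr 1
      ring
    linarith [hlam i]
  have hexponent ω : 2 * lam * (μ * ∑ i, (Y i ω - b i) * (γ ⬝ᵥ Ψ i)) / (μ * Real.sqrt q) =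
      ∑ i, c i * (Y i ω - b i) := by
    rw [mul_left_comm, mul_div_mul_left _ _ hμ.ne', Finset.mul_sum, Finset.sum_div]
    refine Finset.sum_congr rfl fun i _ => ?_
    ring
  -- `c` vanishes when `q = 0` (division by zero), so only `q / q ≤ 1` is available
  have hvariance : ∑ i, c i ^ 2 * 𝔫 i ^ 2 / 2 ≤ 2 * lam ^ 2 := by
    have : ∑ i, c i ^ 2 * 𝔫 i ^ 2 / 2 = 2 * lam ^ 2 * (q / q) :=
      calc ∑ i, c i ^ 2 * 𝔫 i ^ 2 / 2 = 2 * lam ^ 2 / q * ∑ j, (𝔫 j) ^ 2 * (γ ⬝ᵥ Ψ j) ^ 2 := by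
            simp only [c, div_pow, mul_pow, Real.sq_sqrt hq_nonneg, Finset.mul_sum]
            refine Finset.sum_congr rfl fun i _ => ?_
            ring
        _ = 2 * lam ^ 2 * (q / q) := by rw [← hq]; ring
    rw [this]
    exact mul_le_of_le_one_right (by positivity) (div_self_le_one q)
  obtain ⟨hint, hle⟩ := (hYindep.sub_const b).integrable_exp_sum_mul_and_integral_le
    (fun i => (hYmeas i).sub_const (b i)) h𝔫 hexp hc
  simp only [hsqrt, hexponent]
  exact (lintegral_ofReal_le_ofReal_iff (fun ω => (Real.exp_pos _).le)
    hint.aestronglyMeasurable (Real.exp_pos _).le).2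
    ⟨hint, hle.trans (Real.exp_le_exp.2 hvariance)⟩

end GLM

theorem statement8_general
    {Ω : Type*} [MeasurableSpace Ω] (P : Measure Ω)
    {n p : ℕ} (Y : Fin n → Ω → ℝ) (hYmeas : ∀ i, Measurable (Y i))
    (hYindep : ProbabilityTheory.iIndepFun Y P)
    (b : Fin n → ℝ)
    (Ψ : Fin n → Fin p → ℝ)
    (d : ℝ → ℝ)
    (Θ : Set (Fin p → ℝ)) (θ₀ : Fin p → ℝ)
    (μ : ℝ) (hμ : 0 < μ)
    -- the exponential moment condition (expζᵢ)
    (lam₁ : ℝ)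
    (𝔫 : Fin n → ℝ) (h𝔫 : ∀ i, 0 < 𝔫 i)
    (hexp : ∀ i, ∀ lam : ℝ, |lam| ≤ lam₁ →
      ∫⁻ ω, ENNReal.ofReal (Real.exp (2 * lam * (Y i ω - b i) / 𝔫 i)) ∂P
        ≤ ENNReal.ofReal (Real.exp (2 * lam ^ 2))) :
    -- (a): condition (E) holds
    ((∀ θ ∈ Θ, ∀ i, μ * |Ψ i ⬝ᵥ (θ - θ₀)| * 𝔫 i ≤ lam₁) →
      ∀ θ ∈ Θ, Integrable (fun ω => Real.exp (glmL Y Ψ d μ θ ω - glmL Y Ψ d μ θ₀ ω)) P)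
    -- (b): condition (ED) holds with `V(⋅) ≡ V = μ² V₁`
    ∧ (∀ lam : ℝ,
        (∀ i, ∀ γ : Fin p → ℝ, γ ⬝ᵥ γ = 1 →
          |lam * ((γ ⬝ᵥ Ψ i) * 𝔫 i /
            Real.sqrt (qf (∑ j, (𝔫 j) ^ 2 • vecMulVec (Ψ j) (Ψ j)) γ))| ≤ lam₁) →
        ∀ γ : Fin p → ℝ, γ ⬝ᵥ γ = 1 →
          ∫⁻ ω, ENNReal.ofReal (Real.exp (2 * lam *
              (μ * ∑ i, (Y i ω - b i) * (γ ⬝ᵥ Ψ i)) /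
              Real.sqrt (qf (μ ^ 2 • ∑ j, (𝔫 j) ^ 2 • vecMulVec (Ψ j) (Ψ j)) γ))) ∂P
            ≤ ENNReal.ofReal (Real.exp (2 * lam ^ 2))) :=
  ⟨fun hΘ θ hθ => integrable_exp_glmL_sub hYmeas hYindep h𝔫 hexp Ψ d hμ (hΘ θ hθ),
    fun _ hlam γ hγ =>
      lintegral_exp_normalized_score_le hYmeas hYindep h𝔫 hexp Ψ hμ fun i => hlam i γ hγ⟩

/-- Lemma 3.1: conditions `(E)` and `(ED)` in the generalized
linear model. -/
theorem statement8
    {Ω : Type*} [MeasurableSpace Ω] (P : Measure Ω) [IsProbabilityMeasure P]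
    {n p : ℕ} (Y : Fin n → Ω → ℝ) (hYmeas : ∀ i, Measurable (Y i))
    (hYindep : ProbabilityTheory.iIndepFun Y P)
    (hYint : ∀ i, Integrable (Y i) P)
    (b : Fin n → ℝ) (hb : ∀ i, b i = ∫ ω, Y i ω ∂P)
    (Ψ : Fin n → Fin p → ℝ)
    (d : ℝ → ℝ) (hd : ConvexOn ℝ univ d)
    (Θ : Set (Fin p → ℝ)) (θ₀ : Fin p → ℝ) (hθ₀ : θ₀ ∈ Θ)
    (μ : ℝ) (hμ : 0 < μ)
    (hmax : ∀ θ ∈ Θ, ∫ ω, glmL Y Ψ d μ θ ω ∂P ≤ ∫ ω, glmL Y Ψ d μ θ₀ ω ∂P)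
    -- the exponential moment condition (expζᵢ)
    (lam₁ : ℝ) (hlam₁ : 0 < lam₁)
    (𝔫 : Fin n → ℝ) (h𝔫 : ∀ i, 0 < 𝔫 i)
    (hexp : ∀ i, ∀ lam : ℝ, |lam| ≤ lam₁ →
      ∫⁻ ω, ENNReal.ofReal (Real.exp (2 * lam * (Y i ω - b i) / 𝔫 i)) ∂P
        ≤ ENNReal.ofReal (Real.exp (2 * lam ^ 2))) :
    -- (a): condition (E) holds
    ((∀ θ ∈ Θ, ∀ i, μ * |Ψ i ⬝ᵥ (θ - θ₀)| * 𝔫 i ≤ lam₁) →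
      ∀ θ ∈ Θ, Integrable (fun ω => Real.exp (glmL Y Ψ d μ θ ω - glmL Y Ψ d μ θ₀ ω)) P)
    -- (b): condition (ED) holds with `V(⋅) ≡ V = μ² V₁`
    ∧ (∀ lam : ℝ,
        (∀ i, ∀ γ : Fin p → ℝ, γ ⬝ᵥ γ = 1 →
          |lam * ((γ ⬝ᵥ Ψ i) * 𝔫 i /
            Real.sqrt (qf (∑ j, (𝔫 j) ^ 2 • vecMulVec (Ψ j) (Ψ j)) γ))| ≤ lam₁) →
        ∀ γ : Fin p → ℝ, γ ⬝ᵥ γ = 1 →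
          ∫⁻ ω, ENNReal.ofReal (Real.exp (2 * lam *
              (μ * ∑ i, (Y i ω - b i) * (γ ⬝ᵥ Ψ i)) /
              Real.sqrt (qf (μ ^ 2 • ∑ j, (𝔫 j) ^ 2 • vecMulVec (Ψ j) (Ψ j)) γ))) ∂P
            ≤ ENNReal.ofReal (Real.exp (2 * lam ^ 2))) :=
  statement8_general P Y hYmeas hYindep b Ψ d Θ θ₀ μ hμ lam₁ 𝔫 h𝔫 hexp

end
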